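/- (Lyapunov function bounds for attitude dynamics) Let J be symmetric positive definite with eigenvalue bounds λ_m ≤ λ_M, let k_R, c₂ > 0, and suppose Ψ(R,R_d) < ψ₂ < 2. Define V₂ = (1/2) e_Ω·Je_Ω + k_R Ψ(R,R_d) + c₂ e_R·Je_Ω, with Ψ = (1/2)tr(I−R_dᵀR), e_R = (1/2)(R_dᵀR−RᵀR_d)^∨. Then z₂ᵀM₂₁z₂ ≤ V₂ ≤ z₂ᵀM₂₂z₂ where z₂ = (‖e_R‖,‖e_Ω‖), M₂₁ = (1/2)[[k_R, −c₂λ_M],[−c₂λ_M, λ_m]], M₂₂ = (1/2)[[2k_R/(2−ψ₂), c₂λ_M],[c₂λ_M, λ_M]]. -/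

import Mathlib

open Matrix

noncomputable section

/-- The hat map `ℝ³ → 𝔰𝔬(3)`, with `hat x *ᵥ y = x × y`. -/
def hat (x : Fin 3 → ℝ) : Matrix (Fin 3) (Fin 3) ℝ :=
  !![0, -x 2, x 1; x 2, 0, -x 0; -x 1, x 0, 0]

/-- The vee map, inverse of the hat map on skew-symmetric matrices. -/
def vee (A : Matrix (Fin 3) (Fin 3) ℝ) : Fin 3 → ℝ :=
  ![A 2 1, A 0 2, A 1 0]

/-- Membership in the special orthogonal group SO(3). -/
def SO3 (R : Matrix (Fin 3) (Fin 3) ℝ) : Prop :=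
  Rᵀ * R = 1 ∧ R.det = 1

/-- Euclidean norm on `ℝ³` (and `ℝ²`). -/
def norm3 (x : Fin 3 → ℝ) : ℝ := Real.sqrt (x ⬝ᵥ x)

def norm2v (x : Fin 2 → ℝ) : ℝ := Real.sqrt (x ⬝ᵥ x)

/-- Attitude error function `Ψ(R,R_d) = (1/2) tr (G (I - R_dᵀ R))`. -/
def Psi (G R Rd : Matrix (Fin 3) (Fin 3) ℝ) : ℝ :=
  (1 / 2) * (G * (1 - Rdᵀ * R)).trace

/-- Attitude error vector `e_R = (1/2) (G R_dᵀ R - Rᵀ R_d G)^∨`. -/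
def eR (G R Rd : Matrix (Fin 3) (Fin 3) ℝ) : Fin 3 → ℝ :=
  (1 / 2 : ℝ) • vee (G * Rdᵀ * R - Rᵀ * Rd * G)

/-- Third standard basis vector of `ℝ³`. -/
def e3 : Fin 3 → ℝ := ![0, 0, 1]

/-!
If `Q = R_dᵀ R` rotates by the angle `θ`, then `Ψ = 1 - cos θ` and `‖e_R‖ = sin θ`, so
`‖e_R‖² = Ψ (2 - Ψ)`. Hence `‖e_R‖² / 2 ≤ Ψ` always, and `Ψ ≤ ‖e_R‖² / (2 - ψ₂)` as soon as
`0 ≤ Ψ < ψ₂`. Cauchy–Schwarz for the form of `J` bounds the cross term by `λ_M ‖e_R‖ ‖e_Ω‖`, the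
eigenvalue bounds control the kinetic term, and adding the three estimates gives both quadratic
forms.
-/

lemma Matrix.PosSemidef.dotProduct_mulVec_sq_le {n : Type*} [Fintype n] [DecidableEq n]
    {J : Matrix n n ℝ} (hJ : J.PosSemidef) (x y : n → ℝ) :
    (x ⬝ᵥ (J *ᵥ y)) ^ 2 ≤ (x ⬝ᵥ (J *ᵥ x)) * (y ⬝ᵥ (J *ᵥ y)) := by
  have hsymm : J.toBilin'.IsSymm := Matrix.isSymm_toBilin'_iff_isSymm.mpr hJ.isHermitian
  simpa only [Matrix.toBilin'_apply'] using
    LinearMap.BilinForm.apply_sq_le_of_symm J.toBilin'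
      (fun z => by simpa only [Matrix.toBilin'_apply', star_trivial] using
        hJ.dotProduct_mulVec_nonneg z)
      (LinearMap.BilinForm.isSymm_iff.mp hsymm) x y

lemma norm3_sq (x : Fin 3 → ℝ) : norm3 x ^ 2 = x ⬝ᵥ x :=
  Real.sq_sqrt (Fintype.sum_nonneg fun i => mul_self_nonneg (x i))

lemma abs_dotProduct_mulVec_le {J : Matrix (Fin 3) (Fin 3) ℝ} (hJ : J.PosSemidef) {lM : ℝ}
    (hlM : ∀ x : Fin 3 → ℝ, x ⬝ᵥ (J *ᵥ x) ≤ lM * (x ⬝ᵥ x)) (x y : Fin 3 → ℝ) :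
    |x ⬝ᵥ (J *ᵥ y)| ≤ lM * norm3 x * norm3 y := by
  have hlM0 : 0 ≤ lM := by
    simpa using (hJ.dotProduct_mulVec_nonneg (Pi.single 0 1)).trans (hlM (Pi.single 0 1))
  have hx : 0 ≤ x ⬝ᵥ (J *ᵥ x) := by simpa using hJ.dotProduct_mulVec_nonneg x
  have hy : 0 ≤ y ⬝ᵥ (J *ᵥ y) := by simpa using hJ.dotProduct_mulVec_nonneg y
  have hxM : x ⬝ᵥ (J *ᵥ x) ≤ lM * norm3 x ^ 2 := norm3_sq x ▸ hlM x
  have hyM : y ⬝ᵥ (J *ᵥ y) ≤ lM * norm3 y ^ 2 := norm3_sq y ▸ hlM y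
  refine abs_le_of_sq_le_sq ?_ (by unfold norm3; positivity)
  calc (x ⬝ᵥ (J *ᵥ y)) ^ 2 ≤ (x ⬝ᵥ (J *ᵥ x)) * (y ⬝ᵥ (J *ᵥ y)) :=
        hJ.dotProduct_mulVec_sq_le x y
    _ ≤ (lM * norm3 x ^ 2) * (lM * norm3 y ^ 2) := by gcongr
    _ = (lM * norm3 x * norm3 y) ^ 2 := by ring

theorem SO3.transpose_mul {R Rd : Matrix (Fin 3) (Fin 3) ℝ} (hR : SO3 R) (hRd : SO3 Rd) :
    SO3 (Rdᵀ * R) := by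
  refine ⟨?_, by rw [det_mul, det_transpose, hRd.2, hR.2, one_mul]⟩
  have hRdRdT : Rd * Rdᵀ = 1 := mul_eq_one_comm.mp hRd.1
  rw [Matrix.transpose_mul, transpose_transpose, Matrix.mul_assoc, ← Matrix.mul_assoc Rd,
    hRdRdT, Matrix.one_mul, hR.1]

theorem SO3.adjugate_eq_transpose {Q : Matrix (Fin 3) (Fin 3) ℝ} (hQ : SO3 Q) :
    Q.adjugate = Qᵀ := by
  have h := Matrix.inv_eq_left_inv hQ.1
  rwa [Matrix.inv_def, hQ.2, Ring.inverse_one, one_smul] at h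

theorem SO3.vee_sub_transpose_dotProduct_self {Q : Matrix (Fin 3) (Fin 3) ℝ} (hQ : SO3 Q) :
    ((1 / 2 : ℝ) • vee (Q - Qᵀ)) ⬝ᵥ ((1 / 2 : ℝ) • vee (Q - Qᵀ))
      = (1 / 2 * (1 - Q).trace) * (2 - 1 / 2 * (1 - Q).trace) := by
  -- Orthonormal columns and `adj Q = Qᵀ` on the diagonal turn this into a polynomial identity.
  have hcol (j : Fin 3) : Q 0 j * Q 0 j + Q 1 j * Q 1 j + Q 2 j * Q 2 j = 1 := by
    simpa [Matrix.mul_apply, Fin.sum_univ_three] using congrFun (congrFun hQ.1 j) j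
  have hcof (i : Fin 3) : Q.adjugate i i = Q i i := by rw [hQ.adjugate_eq_transpose]; rfl
  have hcof₀ := hcof 0
  have hcof₁ := hcof 1
  have hcof₂ := hcof 2
  simp only [adjugate_fin_three, of_apply, cons_val', cons_val_zero, cons_val_one, cons_val,
    cons_val_fin_one] at hcof₀ hcof₁ hcof₂
  simp only [vee, dotProduct, Matrix.sub_apply, transpose_apply, Pi.smul_apply, smul_eq_mul,
    Fin.sum_univ_three, cons_val_zero, cons_val_one, cons_val, trace, diag_apply, one_apply_eq]
  linear_combination
    (1 / 4 : ℝ) * (hcol 0 + hcol 1 + hcol 2) + (1 / 2 : ℝ) * (hcof₀ + hcof₁ + hcof₂)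

lemma sq_norm3_eR {R Rd : Matrix (Fin 3) (Fin 3) ℝ} (hR : SO3 R) (hRd : SO3 Rd) :
    norm3 (eR 1 R Rd) ^ 2 = Psi 1 R Rd * (2 - Psi 1 R Rd) := by
  have h := (hR.transpose_mul hRd).vee_sub_transpose_dotProduct_self
  rw [Matrix.transpose_mul, transpose_transpose] at h
  simpa [norm3_sq, eR, Psi, Matrix.mul_assoc] using h

lemma half_sq_norm3_eR_le_Psi {R Rd : Matrix (Fin 3) (Fin 3) ℝ} (hR : SO3 R) (hRd : SO3 Rd) :
    norm3 (eR 1 R Rd) ^ 2 / 2 ≤ Psi 1 R Rd := by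
  nlinarith [sq_norm3_eR hR hRd, sq_nonneg (Psi 1 R Rd)]

lemma Psi_le_sq_norm3_eR_div {R Rd : Matrix (Fin 3) (Fin 3) ℝ} (hR : SO3 R) (hRd : SO3 Rd)
    {ψ₂ : ℝ} (hψ₂ : ψ₂ < 2) (hΨ : Psi 1 R Rd < ψ₂) :
    Psi 1 R Rd ≤ norm3 (eR 1 R Rd) ^ 2 / (2 - ψ₂) := by
  have hsq := sq_norm3_eR hR hRd
  have hΨ_nonneg : 0 ≤ Psi 1 R Rd :=
    nonneg_of_mul_nonneg_left (hsq ▸ sq_nonneg _) (by linarith)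
  rw [le_div_iff₀ (by linarith), hsq]
  nlinarith [mul_nonneg hΨ_nonneg (sub_nonneg.mpr hΨ.le)]

lemma dotProduct_mulVec_fin_two_symm (a b p q s : ℝ) :
    ![a, b] ⬝ᵥ (!![p, q; q, s] *ᵥ ![a, b]) = p * a ^ 2 + 2 * q * a * b + s * b ^ 2 := by
  simp only [dotProduct, mulVec_cons, mulVec_empty, add_zero, Pi.add_apply, Pi.smul_apply,
    Function.comp_apply, smul_eq_mul, Fin.sum_univ_two, cons_val_zero, head_cons, tail_cons,
    cons_val_one, cons_val_fin_one]
  ring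

theorem lyapunov_bounds_general
    (J : Matrix (Fin 3) (Fin 3) ℝ) (hJ : J.PosDef)
    (lm lM : ℝ)
    (hlm : ∀ x : Fin 3 → ℝ, lm * (x ⬝ᵥ x) ≤ x ⬝ᵥ (J *ᵥ x))
    (hlM : ∀ x : Fin 3 → ℝ, x ⬝ᵥ (J *ᵥ x) ≤ lM * (x ⬝ᵥ x))
    (kR c₂ ψ₂ : ℝ) (hkR : 0 < kR) (hc₂ : 0 < c₂) (hψ₂ : ψ₂ < 2)
    (R Rd : Matrix (Fin 3) (Fin 3) ℝ) (hR : SO3 R) (hRd : SO3 Rd)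
    (hΨ : Psi 1 R Rd < ψ₂) (eΩ : Fin 3 → ℝ) :
    ![norm3 (eR 1 R Rd), norm3 eΩ] ⬝ᵥ
        (((1 / 2 : ℝ) • !![kR, -c₂ * lM; -c₂ * lM, lm])
          *ᵥ ![norm3 (eR 1 R Rd), norm3 eΩ])
      ≤ (1 / 2) * (eΩ ⬝ᵥ (J *ᵥ eΩ)) + kR * Psi 1 R Rd
          + c₂ * (eR 1 R Rd ⬝ᵥ (J *ᵥ eΩ)) ∧
    (1 / 2) * (eΩ ⬝ᵥ (J *ᵥ eΩ)) + kR * Psi 1 R Rd + c₂ * (eR 1 R Rd ⬝ᵥ (J *ᵥ eΩ))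
      ≤ ![norm3 (eR 1 R Rd), norm3 eΩ] ⬝ᵥ
        (((1 / 2 : ℝ) • !![2 * kR / (2 - ψ₂), c₂ * lM; c₂ * lM, lM])
          *ᵥ ![norm3 (eR 1 R Rd), norm3 eΩ]) := by
  have hΩ_lower : lm * norm3 eΩ ^ 2 ≤ eΩ ⬝ᵥ (J *ᵥ eΩ) := norm3_sq eΩ ▸ hlm eΩ
  have hΩ_upper : eΩ ⬝ᵥ (J *ᵥ eΩ) ≤ lM * norm3 eΩ ^ 2 := norm3_sq eΩ ▸ hlM eΩ
  have hcross := abs_le.mp (abs_dotProduct_mulVec_le hJ.posSemidef hlM (eR 1 R Rd) eΩ)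
  have hΨ_lower := mul_le_mul_of_nonneg_left (half_sq_norm3_eR_le_Psi hR hRd) hkR.le
  have hΨ_upper := mul_le_mul_of_nonneg_left (Psi_le_sq_norm3_eR_div hR hRd hψ₂ hΨ) hkR.le
  have hcross_lower := mul_le_mul_of_nonneg_left hcross.1 hc₂.le
  have hcross_upper := mul_le_mul_of_nonneg_left hcross.2 hc₂.le
  simp only [smul_mulVec, dotProduct_smul, dotProduct_mulVec_fin_two_symm, smul_eq_mul]
  have hkR_div : 2 * kR / (2 - ψ₂) * norm3 (eR 1 R Rd) ^ 2
      = 2 * (kR * (norm3 (eR 1 R Rd) ^ 2 / (2 - ψ₂))) := by ring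
  constructor <;> linarith

/-- Lyapunov function bounds `z₂ᵀ M₂₁ z₂ ≤ V₂ ≤ z₂ᵀ M₂₂ z₂` for
`V₂ = (1/2) e_Ω⋅Je_Ω + k_R Ψ(R,R_d) + c₂ e_R⋅Je_Ω`, where `λ_m, λ_M` are eigenvalue
bounds of the symmetric positive definite inertia matrix `J`. -/
theorem lyapunov_bounds
    (J : Matrix (Fin 3) (Fin 3) ℝ) (hJ : J.PosDef)
    (lm lM : ℝ) (hlmM : lm ≤ lM)
    (hlm : ∀ x : Fin 3 → ℝ, lm * (x ⬝ᵥ x) ≤ x ⬝ᵥ (J *ᵥ x))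
    (hlM : ∀ x : Fin 3 → ℝ, x ⬝ᵥ (J *ᵥ x) ≤ lM * (x ⬝ᵥ x))
    (kR c₂ ψ₂ : ℝ) (hkR : 0 < kR) (hc₂ : 0 < c₂) (hψ₂ : ψ₂ < 2)
    (R Rd : Matrix (Fin 3) (Fin 3) ℝ) (hR : SO3 R) (hRd : SO3 Rd)
    (hΨ : Psi 1 R Rd < ψ₂) (eΩ : Fin 3 → ℝ) :
    ![norm3 (eR 1 R Rd), norm3 eΩ] ⬝ᵥ
        (((1 / 2 : ℝ) • !![kR, -c₂ * lM; -c₂ * lM, lm])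
          *ᵥ ![norm3 (eR 1 R Rd), norm3 eΩ])
      ≤ (1 / 2) * (eΩ ⬝ᵥ (J *ᵥ eΩ)) + kR * Psi 1 R Rd
          + c₂ * (eR 1 R Rd ⬝ᵥ (J *ᵥ eΩ)) ∧
    (1 / 2) * (eΩ ⬝ᵥ (J *ᵥ eΩ)) + kR * Psi 1 R Rd + c₂ * (eR 1 R Rd ⬝ᵥ (J *ᵥ eΩ))
      ≤ ![norm3 (eR 1 R Rd), norm3 eΩ] ⬝ᵥ
        (((1 / 2 : ℝ) • !![2 * kR / (2 - ψ₂), c₂ * lM; c₂ * lM, lM])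
          *ᵥ ![norm3 (eR 1 R Rd), norm3 eΩ]) :=
  lyapunov_bounds_general J hJ lm lM hlm hlM kR c₂ ψ₂ hkR hc₂ hψ₂ R Rd hR hRd hΨ eΩ
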